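/- Let g : ℝ → ℝ be any map such that g(x) = x whenever x < −10 or x > 1, and g(x) = T₁(x) for all x ∈ [−1, 1]. Then g maps K₊ into itself: g '' K₊ ⊆ K₊. -/

import Mathlib

/-!
Self-similarity forces `C ⊆ [-1, 1]` (an extreme point of `C` is the image of a point of `C`
under a contraction fixing a point of `[-1, 1]`) and `0 ∈ C` (the `T₀`-orbit of any point stays
in the closed set `C` and tends to `0`). Hence the pieces `T₀^[n] '' (C₁ ∪ C₋₁)` with `n ≥ 0`, and
`0`, lie in `C ⊆ [-1, 1]`, where `g = T₁` sends them into `C₁ ⊆ K₊`. The pieces with `i < 0` are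
scaled by at least `100`, and `C₁ ⊆ [0.98, 1]`, `C₋₁ ⊆ [-1, -0.98]`, so they lie in
`(1, ∞) ∪ (-∞, -10)`, where `g` is the identity.
-/

noncomputable section

/-- The affine contraction of ratio 1/100 fixing 0. -/
def T0 (x : ℝ) : ℝ := x / 100

/-- The affine contraction of ratio 1/100 fixing 1. -/
def T1 (x : ℝ) : ℝ := 1 + (x - 1) / 100

/-- The affine contraction of ratio 1/100 fixing -1. -/
def Tm1 (x : ℝ) : ℝ := -1 + (x + 1) / 100

/-- The inverse of `T0`. -/
def T0inv (x : ℝ) : ℝ := 100 * x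

/-- The `i`-th iterate of `T0` for `i ≥ 0`, and the `|i|`-th iterate of
`T0⁻¹ : x ↦ 100 x` for `i < 0`. -/
def T0z : ℤ → ℝ → ℝ
  | Int.ofNat n => T0^[n]
  | Int.negSucc n => T0inv^[n + 1]

/-- The set `K₊ = {0} ∪ ⋃ i ∈ ℤ, T₀^[i] '' (C₁ ∪ C₋₁)` where `C₁ = T₁ '' C`,
`C₋₁ = T₋₁ '' C`. -/
def Kplus (C : Set ℝ) : Set ℝ := {0} ∪ ⋃ i : ℤ, T0z i '' (T1 '' C ∪ Tm1 '' C)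

open Set Filter Topology

theorem mem_of_mapsTo_of_tendsto_iterate {X : Type*} [TopologicalSpace X] {s : Set X}
    {f : X → X} {p : X} (hs : IsClosed s) (hne : s.Nonempty) (hf : MapsTo f s s)
    (h : ∀ x, Tendsto (fun n => f^[n] x) atTop (𝓝 p)) : p ∈ s := by
  obtain ⟨x, hx⟩ := hne
  exact hs.mem_of_tendsto (h x) (Eventually.of_forall fun n => hf.iterate n hx)

theorem T0_iterate_apply (n : ℕ) (x : ℝ) : T0^[n] x = x / 100 ^ n := by
  induction n with
  | zero => simp
  | succ n ih => rw [Function.iterate_succ_apply', ih, T0, pow_succ]; ring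

theorem T0z_negSucc_apply (n : ℕ) (x : ℝ) : T0z (Int.negSucc n) x = 100 ^ (n + 1) * x := by
  change T0inv^[n + 1] x = _
  induction n + 1 with
  | zero => simp
  | succ n ih => rw [Function.iterate_succ_apply', ih, T0inv, pow_succ]; ring

theorem tendsto_T0_iterate (x : ℝ) : Tendsto (fun n => T0^[n] x) atTop (𝓝 0) := by
  simp only [T0_iterate_apply, div_eq_mul_inv, ← inv_pow]
  simpa using (tendsto_pow_atTop_nhds_zero_of_lt_one (r := (100 : ℝ)⁻¹)
    (by norm_num) (by norm_num)).const_mul x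

theorem one_lt_T0z_negSucc {y : ℝ} (hy : 98 / 100 ≤ y) (n : ℕ) :
    1 < T0z (Int.negSucc n) y := by
  have : (1 : ℝ) ≤ 100 ^ n := one_le_pow₀ (by norm_num)
  rw [T0z_negSucc_apply, pow_succ]
  nlinarith

theorem T0z_negSucc_lt {y : ℝ} (hy : y ≤ -98 / 100) (n : ℕ) :
    T0z (Int.negSucc n) y < -10 := by
  have : (1 : ℝ) ≤ 100 ^ n := one_le_pow₀ (by norm_num)
  rw [T0z_negSucc_apply, pow_succ]
  nlinarith

theorem T0z_mem_Kplus (C : Set ℝ) (i : ℤ) {y : ℝ} (hy : y ∈ T1 '' C ∪ Tm1 '' C) :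
    T0z i y ∈ Kplus C :=
  Or.inr (mem_iUnion.2 ⟨i, y, hy, rfl⟩)

theorem T1_image_subset_Kplus (C : Set ℝ) : T1 '' C ⊆ Kplus C :=
  fun _ hy => T0z_mem_Kplus C 0 (Or.inl hy)

section SelfSimilar

variable {C : Set ℝ} (hself : C = Tm1 '' C ∪ T0 '' C ∪ T1 '' C)
include hself

theorem mapsTo_T0_of_selfSimilar : MapsTo T0 C C := fun x hx => by
  rw [hself]; exact Or.inl (Or.inr ⟨x, hx, rfl⟩)

theorem image_union_subset_of_selfSimilar : T1 '' C ∪ Tm1 '' C ⊆ C := by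
  nth_rw 3 [hself]
  exact union_subset subset_union_right (subset_union_left.trans subset_union_left)

theorem le_one_of_selfSimilar (hcomp : IsCompact C) {x : ℝ} (hx : x ∈ C) : x ≤ 1 := by
  obtain ⟨M, hMC, hM⟩ := hcomp.exists_isGreatest ⟨x, hx⟩
  have hMself := hMC
  rw [hself] at hMself
  rcases hMself with (⟨y, hy, rfl⟩ | ⟨y, hy, rfl⟩) | ⟨y, hy, rfl⟩ <;>
    have := hM hy <;> have := hM hx <;> simp only [Tm1, T0, T1] at * <;> linarith

theorem neg_one_le_of_selfSimilar (hcomp : IsCompact C) {x : ℝ} (hx : x ∈ C) : -1 ≤ x := by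
  obtain ⟨m, hmC, hm⟩ := hcomp.exists_isLeast ⟨x, hx⟩
  have hmself := hmC
  rw [hself] at hmself
  rcases hmself with (⟨y, hy, rfl⟩ | ⟨y, hy, rfl⟩) | ⟨y, hy, rfl⟩ <;>
    have := hm hy <;> have := hm hx <;> simp only [Tm1, T0, T1] at * <;> linarith

theorem subset_Icc_of_selfSimilar (hcomp : IsCompact C) : C ⊆ Icc (-1) 1 := fun _ hx =>
  ⟨neg_one_le_of_selfSimilar hself hcomp hx, le_one_of_selfSimilar hself hcomp hx⟩

theorem zero_mem_of_selfSimilar (hne : C.Nonempty) (hcomp : IsCompact C) : (0 : ℝ) ∈ C :=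
  mem_of_mapsTo_of_tendsto_iterate hcomp.isClosed hne (mapsTo_T0_of_selfSimilar hself)
    tendsto_T0_iterate

end SelfSimilar

theorem stmt_12 (C : Set ℝ) (hne : C.Nonempty) (hcomp : IsCompact C)
    (hself : C = Tm1 '' C ∪ T0 '' C ∪ T1 '' C)
    (g : ℝ → ℝ)
    (hg_id : ∀ x : ℝ, x < -10 ∨ 1 < x → g x = x)
    (hg_T1 : ∀ x ∈ Set.Icc (-1 : ℝ) 1, g x = T1 x) :
    g '' Kplus C ⊆ Kplus C := by
  have hIcc := subset_Icc_of_selfSimilar hself hcomp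
  have hpieces := image_union_subset_of_selfSimilar hself
  have hg_mem : ∀ x ∈ C, g x ∈ Kplus C := fun x hx => by
    rw [hg_T1 x (hIcc hx)]
    exact T1_image_subset_Kplus C ⟨x, hx, rfl⟩
  rintro _ ⟨x, rfl | hx, rfl⟩
  · exact hg_mem 0 (zero_mem_of_selfSimilar hself hne hcomp)
  obtain ⟨_, ⟨i, rfl⟩, y, hy, rfl⟩ := hx
  cases i with
  | ofNat n => exact hg_mem _ ((mapsTo_T0_of_selfSimilar hself).iterate n (hpieces hy))
  | negSucc n =>
    rw [hg_id]
    · exact T0z_mem_Kplus C _ hy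
    rcases hy with ⟨z, hz, rfl⟩ | ⟨z, hz, rfl⟩ <;> obtain ⟨hz₁, hz₂⟩ := hIcc hz
    · exact Or.inr (one_lt_T0z_negSucc (by simp only [T1]; linarith) n)
    · exact Or.inl (T0z_negSucc_lt (by simp only [Tm1]; linarith) n)
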